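/- For all integers h, w ≥ 2, every vertex cover C of the finite triangular grid T₆(h,w) satisfies 3·|C| ≥ 2·h·w − h. -/

import Mathlib

/-- A vertex cover of a simple graph: every edge has at least one endpoint in `C`. -/
def IsVertexCover {V : Type*} (G : SimpleGraph V) (C : Set V) : Prop :=
  ∀ ⦃u v : V⦄, G.Adj u v → u ∈ C ∨ v ∈ C

/-- The box `{0,…,w−1} × {0,…,h−1}` (w columns, h rows). -/
def box (w h : ℕ) : Set (ℤ × ℤ) :=
  Set.Ico (0 : ℤ) (w : ℤ) ×ˢ Set.Ico (0 : ℤ) (h : ℤ)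

/-- Subgraph of `G` induced on a set `s` of vertices (kept on the same vertex type). -/
def finGrid (G : SimpleGraph (ℤ × ℤ)) (w h : ℕ) : SimpleGraph (ℤ × ℤ) where
  Adj p q := G.Adj p q ∧ p ∈ box w h ∧ q ∈ box w h
  symm := ⟨fun p q hpq => ⟨hpq.1.symm, hpq.2.2, hpq.2.1⟩⟩
  loopless := ⟨fun p hp => G.loopless.irrefl p hp.1⟩

/-- The infinite triangular grid. -/
def T6 : SimpleGraph (ℤ × ℤ) :=
  SimpleGraph.fromRel (fun p q =>
    (q.1 - p.1, q.2 - p.2) ∈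
      ({(1, 0), (-1, 0), (0, 1), (0, -1), (1, 1), (-1, -1)} : Set (ℤ × ℤ)))

/-!
The complement `I` of a vertex cover is an independent set, so it meets every clique of the
grid at most once. A strip of two rows and width `w` is partitioned into `⌈2w/3⌉` triangles
(two per block of three columns), and a strip of three rows into at most `w + 1` triangles
(two per pair of columns). Stacking two-row strips, with one three-row strip on top when `h`
is odd, gives `3|I| ≤ hw + h`, and `|C| = hw - |I|`.
-/

namespace SimpleGraph

variable {V β : Type*} {G : SimpleGraph V}

theorem IsIndepSet.ncard_le_card {I : Set V} (hI : G.IsIndepSet I) (f : V → β) (t : Finset β)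
    (hmaps : ∀ v ∈ I, f v ∈ t) (hfib : ∀ u ∈ I, ∀ v ∈ I, u ≠ v → f u = f v → G.Adj u v) :
    I.ncard ≤ t.card := by
  have hinj : Set.InjOn f I := fun u hu v hv huv =>
    by_contra fun hne => hI hu hv hne (hfib u hu v hv hne huv)
  simpa using Set.ncard_le_ncard_of_injOn f hmaps hinj t.finite_toSet

end SimpleGraph

theorem isIndepSet_box_sdiff {G : SimpleGraph (ℤ × ℤ)} {w h : ℕ} {C : Set (ℤ × ℤ)}
    (hcov : IsVertexCover (finGrid G w h) C) : G.IsIndepSet (box w h \ C) := by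
  intro u hu v hv _ hadj
  rcases hcov ⟨hadj, hu.1, hv.1⟩ with hC | hC
  exacts [hu.2 hC, hv.2 hC]

theorem box_ncard (w h : ℕ) : (box w h).ncard = w * h := by
  rw [box, Set.ncard_prod, ← Finset.coe_Ico, ← Finset.coe_Ico, Set.ncard_coe_finset,
    Set.ncard_coe_finset, Int.card_Ico, Int.card_Ico]
  simp

theorem box_add_two (w k : ℕ) :
    box w (k + 2) = box w k ∪ Set.Ico 0 (w : ℤ) ×ˢ Set.Ico (k : ℤ) (k + 2) := by
  ext ⟨x, y⟩
  simp only [box, Set.mem_union, Set.mem_prod, Set.mem_Ico]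
  push_cast
  omega

theorem T6_adj_of_le {a b c d : ℤ} (hne : (a, b) ≠ (c, d))
    (hc : a ≤ c ∧ c ≤ a + 1) (hd : b ≤ d ∧ d ≤ b + 1) : T6.Adj (a, b) (c, d) := by
  refine (SimpleGraph.fromRel_adj _ _ _).2 ⟨hne, Or.inl ?_⟩
  obtain rfl | rfl : c = a ∨ c = a + 1 := by omega
  all_goals obtain rfl | rfl : d = b ∨ d = b + 1 := by omega
  all_goals simp_all

theorem T6_adj_of {a b c d : ℤ} (hne : (a, b) ≠ (c, d))
    (hle : a ≤ c ∧ c ≤ a + 1 ∧ b ≤ d ∧ d ≤ b + 1 ∨ c ≤ a ∧ a ≤ c + 1 ∧ d ≤ b ∧ b ≤ d + 1) :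
    T6.Adj (a, b) (c, d) := by
  rcases hle with ⟨h₁, h₂, h₃, h₄⟩ | ⟨h₁, h₂, h₃, h₄⟩
  · exact T6_adj_of_le hne ⟨h₁, h₂⟩ ⟨h₃, h₄⟩
  · exact (T6_adj_of_le hne.symm ⟨h₁, h₂⟩ ⟨h₃, h₄⟩).symm

/-- Label `2m` is the triangle `(3m, y₀), (3m, y₀ + 1), (3m + 1, y₀ + 1)` and label `2m + 1` the
triangle `(3m + 1, y₀), (3m + 2, y₀), (3m + 2, y₀ + 1)`. -/
def twoRowLabel (y₀ : ℤ) (p : ℤ × ℤ) : ℕ :=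
  (2 * (p.1 / 3) + if p.1 % 3 = 2 ∨ p.1 % 3 = 1 ∧ p.2 = y₀ then 1 else 0).toNat

/-- Label `2j` is the triangle `(2j, y₀), (2j + 1, y₀), (2j + 1, y₀ + 1)` and label `2j + 1` the
triangle `(2j, y₀ + 1), (2j, y₀ + 2), (2j + 1, y₀ + 2)`. -/
def threeRowLabel (y₀ : ℤ) (p : ℤ × ℤ) : ℕ :=
  (p.1 - p.1 % 2 + if p.1 % 2 = 0 ∧ p.2 ≠ y₀ ∨ p.2 = y₀ + 2 then 1 else 0).toNat

theorem T6_adj_of_twoRowLabel_eq {w : ℕ} {y₀ : ℤ} {p q : ℤ × ℤ}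
    (hp : p ∈ Set.Ico 0 (w : ℤ) ×ˢ Set.Ico y₀ (y₀ + 2))
    (hq : q ∈ Set.Ico 0 (w : ℤ) ×ˢ Set.Ico y₀ (y₀ + 2))
    (hne : p ≠ q) (hpq : twoRowLabel y₀ p = twoRowLabel y₀ q) : T6.Adj p q := by
  obtain ⟨a, b⟩ := p
  obtain ⟨c, d⟩ := q
  simp only [Set.mem_prod, Set.mem_Ico] at hp hq
  refine T6_adj_of hne ?_
  simp only [twoRowLabel] at hpq
  split_ifs at hpq <;> omega

theorem ncard_le_of_isIndepSet_twoRows {w : ℕ} {y₀ : ℤ} {I : Set (ℤ × ℤ)}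
    (hsub : I ⊆ Set.Ico 0 (w : ℤ) ×ˢ Set.Ico y₀ (y₀ + 2)) (hI : T6.IsIndepSet I) :
    3 * I.ncard ≤ 2 * w + 2 := by
  have := hI.ncard_le_card (twoRowLabel y₀) (Finset.range (w - w / 3)) ?_
    (fun u hu v hv => T6_adj_of_twoRowLabel_eq (hsub hu) (hsub hv))
  · simp only [Finset.card_range] at this
    omega
  · intro p hp
    have := hsub hp
    simp only [Set.mem_prod, Set.mem_Ico] at this
    simp only [twoRowLabel, Finset.mem_range]
    split_ifs <;> omega

theorem T6_adj_of_threeRowLabel_eq {w : ℕ} {y₀ : ℤ} {p q : ℤ × ℤ}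
    (hp : p ∈ Set.Ico 0 (w : ℤ) ×ˢ Set.Ico y₀ (y₀ + 3))
    (hq : q ∈ Set.Ico 0 (w : ℤ) ×ˢ Set.Ico y₀ (y₀ + 3))
    (hne : p ≠ q) (hpq : threeRowLabel y₀ p = threeRowLabel y₀ q) : T6.Adj p q := by
  obtain ⟨a, b⟩ := p
  obtain ⟨c, d⟩ := q
  simp only [Set.mem_prod, Set.mem_Ico] at hp hq
  refine T6_adj_of hne ?_
  simp only [threeRowLabel] at hpq
  split_ifs at hpq <;> omega

theorem ncard_le_of_isIndepSet_threeRows {w : ℕ} {y₀ : ℤ} {I : Set (ℤ × ℤ)}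
    (hsub : I ⊆ Set.Ico 0 (w : ℤ) ×ˢ Set.Ico y₀ (y₀ + 3)) (hI : T6.IsIndepSet I) :
    I.ncard ≤ w + 1 := by
  have := hI.ncard_le_card (threeRowLabel y₀) (Finset.range (w + 1)) ?_
    (fun u hu v hv => T6_adj_of_threeRowLabel_eq (hsub hu) (hsub hv))
  · simpa using this
  · intro p hp
    have := hsub hp
    simp only [Set.mem_prod, Set.mem_Ico] at this
    simp only [threeRowLabel, Finset.mem_range]
    split_ifs <;> omega

theorem ncard_le_of_isIndepSet_box {w h : ℕ} (hh : 2 ≤ h) {I : Set (ℤ × ℤ)}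
    (hsub : I ⊆ box w h) (hI : T6.IsIndepSet I) : 3 * I.ncard ≤ h * w + h := by
  induction h using Nat.strong_induction_on generalizing I with
  | _ h ih =>
  obtain rfl | rfl | hh4 : h = 2 ∨ h = 3 ∨ 4 ≤ h := by omega
  · have := ncard_le_of_isIndepSet_twoRows (w := w) (y₀ := 0) (hsub.trans (by simp [box])) hI
    omega
  · have := ncard_le_of_isIndepSet_threeRows (w := w) (y₀ := 0) (hsub.trans (by simp [box])) hI
    omega
  · obtain ⟨k, rfl⟩ : ∃ k, h = k + 2 := ⟨h - 2, by omega⟩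
    rw [box_add_two] at hsub
    have hlow := ih k (by omega) (by omega) Set.inter_subset_right
      (Set.Pairwise.mono Set.inter_subset_left hI) (I := I ∩ box w k)
    have htop := ncard_le_of_isIndepSet_twoRows Set.inter_subset_right
      (Set.Pairwise.mono Set.inter_subset_left hI)
      (I := I ∩ Set.Ico 0 (w : ℤ) ×ˢ Set.Ico (k : ℤ) (k + 2))
    have hunion := Set.ncard_union_le (I ∩ box w k)
      (I ∩ Set.Ico 0 (w : ℤ) ×ˢ Set.Ico (k : ℤ) (k + 2))
    rw [← Set.inter_union_distrib_left, Set.inter_eq_left.2 hsub] at hunion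
    nlinarith

theorem stmt_11_general (h w : ℕ) (hh : 2 ≤ h)
    (C : Set (ℤ × ℤ)) (hsub : C ⊆ box w h)
    (hcov : IsVertexCover (finGrid T6 w h) C) :
    2 * h * w - h ≤ 3 * C.ncard := by
  have hI := ncard_le_of_isIndepSet_box hh Set.sdiff_subset (isIndepSet_box_sdiff hcov)
  have hcount : (box w h \ C).ncard + C.ncard = h * w := by
    rw [Set.ncard_sdiff_add_ncard_of_subset hsub ((Set.finite_Ico _ _).prod (Set.finite_Ico _ _)),
      box_ncard, mul_comm]
  rw [mul_assoc]
  omega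

/-- Every vertex cover of the triangular grid `T₆(h,w)` satisfies `3|C| ≥ 2hw − h`. -/
theorem stmt_11 (h w : ℕ) (hh : 2 ≤ h) (hw : 2 ≤ w)
    (C : Set (ℤ × ℤ)) (hsub : C ⊆ box w h)
    (hcov : IsVertexCover (finGrid T6 w h) C) :
    2 * h * w - h ≤ 3 * C.ncard :=
  stmt_11_general h w hh C hsub hcov
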